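/- Let (f,g) ∈ 𝒞. Then there is a unique minimal set for the semigroup action of ⟨f,g⟩₊ on [0,1], and it equals the closure of O₊(0), and also equals the closure of O₊(1). -/

import Mathlib

def unitI : Set ℝ := Set.Icc 0 1

def memC (f g : ℝ → ℝ) : Prop :=
  ContinuousOn f unitI ∧ ContinuousOn g unitI ∧
  Set.MapsTo f unitI unitI ∧ Set.MapsTo g unitI unitI ∧
  f 0 = 0 ∧ g 1 = 1 ∧
  (∀ x ∈ unitI, x ≠ 0 → 0 < f x ∧ f x < x) ∧
  (∀ x ∈ unitI, x ≠ 1 → x < g x ∧ g x < 1) ∧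
  StrictMonoOn f unitI ∧ StrictMonoOn g unitI

def orbit (f g : ℝ → ℝ) (x : ℝ) : Set ℝ :=
  { y | ∃ w : List (ℝ → ℝ), w ≠ [] ∧ (∀ h ∈ w, h = f ∨ h = g) ∧
        y = w.foldl (fun a h => h a) x }

def IsMinimalSet (f g : ℝ → ℝ) (M : Set ℝ) : Prop :=
  M.Nonempty ∧ M ⊆ unitI ∧ ∀ x ∈ M, closure (orbit f g x) = M

/-! Every word in `f` and `g` is continuous on `[0,1]`, so orbit closures are forward invariant.
The iterates `f^[n] x` decrease to a fixed point of `f`, which can only be `0`, and likewise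
`g^[n] x` increase to `1`; hence `0` and `1` lie in every orbit closure. Thus `closure (orbit f g 0)`
lies in every orbit closure and contains the orbit closure of each of its points, so it is
minimal, every minimal set contains `0` and equals it, and it contains `1`. -/

open Function Filter Set Topology

section FixedPoints

variable {α : Type*} [TopologicalSpace α] [T2Space α] {φ : α → α} {s : Set α} {x y : α}

theorem isFixedPt_of_tendsto_iterate_of_mapsTo (hs : IsClosed s) (hφs : MapsTo φ s s)
    (hφ : ContinuousOn φ s) (hx : x ∈ s) (hy : Tendsto (fun n => φ^[n] x) atTop (𝓝 y)) :
    y ∈ s ∧ IsFixedPt φ y := by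
  have hmem : ∀ n, φ^[n] x ∈ s := fun n => hφs.iterate n hx
  have hys : y ∈ s := hs.mem_of_tendsto hy (Eventually.of_forall hmem)
  have hy' : Tendsto (fun n => φ^[n] x) atTop (𝓝[s] y) :=
    tendsto_nhdsWithin_iff.2 ⟨hy, Eventually.of_forall hmem⟩
  refine ⟨hys, tendsto_nhds_unique ((tendsto_add_atTop_iff_nat 1).1 ?_) hy⟩
  simp only [iterate_succ' φ]
  exact (hφ y hys).tendsto.comp hy'

end FixedPoints

section MonotoneIteration

variable {α : Type*} [ConditionallyCompleteLinearOrder α] [TopologicalSpace α] [OrderTopology α]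
  {φ : α → α} {s : Set α} {x : α}

theorem exists_isFixedPt_tendsto_iterate_of_map_le (hs : IsClosed s) (hbdd : BddBelow s)
    (hφs : MapsTo φ s s) (hφ : ContinuousOn φ s) (hle : ∀ y ∈ s, φ y ≤ y) (hx : x ∈ s) :
    ∃ y ∈ s, IsFixedPt φ y ∧ Tendsto (fun n => φ^[n] x) atTop (𝓝 y) := by
  have hmem : ∀ n, φ^[n] x ∈ s := fun n => hφs.iterate n hx
  have hanti : Antitone fun n => φ^[n] x := antitone_nat_of_succ_le fun n => by
    rw [iterate_succ_apply']
    exact hle _ (hmem n)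
  have hlim := tendsto_atTop_ciInf hanti (hbdd.mono (range_subset_iff.2 hmem))
  obtain ⟨hys, hfix⟩ := isFixedPt_of_tendsto_iterate_of_mapsTo hs hφs hφ hx hlim
  exact ⟨_, hys, hfix, hlim⟩

theorem exists_isFixedPt_tendsto_iterate_of_le_map (hs : IsClosed s) (hbdd : BddAbove s)
    (hφs : MapsTo φ s s) (hφ : ContinuousOn φ s) (hle : ∀ y ∈ s, y ≤ φ y) (hx : x ∈ s) :
    ∃ y ∈ s, IsFixedPt φ y ∧ Tendsto (fun n => φ^[n] x) atTop (𝓝 y) :=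
  exists_isFixedPt_tendsto_iterate_of_map_le (α := αᵒᵈ) hs hbdd hφs hφ hle hx

end MonotoneIteration

section Words

variable {α : Type*} {s : Set α} {w : List (α → α)}

theorem mapsTo_foldl (hw : ∀ u ∈ w, MapsTo u s s) :
    MapsTo (fun x => w.foldl (fun a u => u a) x) s s := by
  induction w with
  | nil => exact mapsTo_id s
  | cons u w ih =>
    simp only [List.forall_mem_cons] at hw
    exact (ih hw.2).comp hw.1

theorem continuousOn_foldl [TopologicalSpace α] (hw : ∀ u ∈ w, ContinuousOn u s ∧ MapsTo u s s) :
    ContinuousOn (fun x => w.foldl (fun a u => u a) x) s := by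
  induction w with
  | nil => exact continuousOn_id
  | cons u w ih =>
    simp only [List.forall_mem_cons] at hw
    exact (ih hw.2).comp hw.1.1 hw.1.2

end Words

namespace memC

variable {f g : ℝ → ℝ}

theorem continuousOn_and_mapsTo (h : memC f g) {u : ℝ → ℝ} (hu : u = f ∨ u = g) :
    ContinuousOn u unitI ∧ MapsTo u unitI unitI := by
  obtain ⟨hfc, hgc, hfm, hgm, -⟩ := h
  rcases hu with rfl | rfl
  exacts [⟨hfc, hfm⟩, ⟨hgc, hgm⟩]

theorem tendsto_iterate_left (h : memC f g) {x : ℝ} (hx : x ∈ unitI) :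
    Tendsto (fun n => f^[n] x) atTop (𝓝 0) := by
  obtain ⟨hfc, -, hfm, -, hf0, -, hflt, -⟩ := h
  have hle : ∀ y ∈ unitI, f y ≤ y := fun y hy => by
    rcases eq_or_ne y 0 with rfl | hy0
    exacts [hf0.le, (hflt y hy hy0).2.le]
  obtain ⟨y, hy, hfix, hlim⟩ := exists_isFixedPt_tendsto_iterate_of_map_le isClosed_Icc
    bddBelow_Icc hfm hfc hle hx
  obtain rfl : y = 0 := by_contra fun hy0 => (hflt y hy hy0).2.ne hfix
  exact hlim

theorem tendsto_iterate_right (h : memC f g) {x : ℝ} (hx : x ∈ unitI) :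
    Tendsto (fun n => g^[n] x) atTop (𝓝 1) := by
  obtain ⟨-, hgc, -, hgm, -, hg1, -, hglt, -⟩ := h
  have hle : ∀ y ∈ unitI, y ≤ g y := fun y hy => by
    rcases eq_or_ne y 1 with rfl | hy1
    exacts [hg1.ge, (hglt y hy hy1).1.le]
  obtain ⟨y, hy, hfix, hlim⟩ := exists_isFixedPt_tendsto_iterate_of_le_map isClosed_Icc
    bddAbove_Icc hgm hgc hle hx
  obtain rfl : y = 1 := by_contra fun hy1 => (hglt y hy hy1).1.ne' hfix
  exact hlim

end memC

section Orbit

variable {f g u : ℝ → ℝ} {x y z : ℝ}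

theorem foldl_mem_orbit (hz : z ∈ orbit f g x) {w : List (ℝ → ℝ)}
    (hw : ∀ u ∈ w, u = f ∨ u = g) : w.foldl (fun a u => u a) z ∈ orbit f g x := by
  obtain ⟨v, hv, hvfg, rfl⟩ := hz
  refine ⟨v ++ w, by simp [hv], fun u hu => ?_, (List.foldl_append ..).symm⟩
  rcases List.mem_append.1 hu with hu | hu
  exacts [hvfg u hu, hw u hu]

theorem iterate_succ_mem_orbit (hu : u = f ∨ u = g) : ∀ n : ℕ, u^[n + 1] x ∈ orbit f g x
  | 0 => ⟨[u], List.cons_ne_nil _ _, by simpa using hu, rfl⟩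
  | n + 1 => by
    rw [iterate_succ_apply']
    exact foldl_mem_orbit (w := [u]) (iterate_succ_mem_orbit hu n) (by simpa using hu)

theorem mem_closure_orbit_of_tendsto_iterate (hu : u = f ∨ u = g)
    (hlim : Tendsto (fun n => u^[n] x) atTop (𝓝 y)) : y ∈ closure (orbit f g x) :=
  mem_closure_of_tendsto ((tendsto_add_atTop_iff_nat 1).2 hlim)
    (Eventually.of_forall (iterate_succ_mem_orbit hu))

theorem orbit_subset_unitI (h : memC f g) (hx : x ∈ unitI) : orbit f g x ⊆ unitI := by
  rintro _ ⟨w, -, hw, rfl⟩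
  exact mapsTo_foldl (fun u hu => (h.continuousOn_and_mapsTo (hw u hu)).2) hx

theorem closure_orbit_subset_unitI (h : memC f g) (hx : x ∈ unitI) :
    closure (orbit f g x) ⊆ unitI :=
  closure_minimal (orbit_subset_unitI h hx) isClosed_Icc

theorem closure_orbit_subset_of_mem (h : memC f g) (hx : x ∈ unitI)
    (hy : y ∈ closure (orbit f g x)) : closure (orbit f g y) ⊆ closure (orbit f g x) := by
  refine closure_minimal ?_ isClosed_closure
  rintro _ ⟨w, -, hw, rfl⟩
  have hwc : ContinuousOn (fun x => w.foldl (fun a u => u a) x) (closure (orbit f g x)) :=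
    (continuousOn_foldl fun u hu => h.continuousOn_and_mapsTo (hw u hu)).mono
      (closure_orbit_subset_unitI h hx)
  have hinv : MapsTo (fun x => w.foldl (fun a u => u a) x) (orbit f g x) (orbit f g x) :=
    fun z hz => foldl_mem_orbit hz hw
  exact closure_mono hinv.image_subset (hwc.image_closure (mem_image_of_mem _ hy))

theorem closure_orbit_zero_subset (h : memC f g) (hx : x ∈ unitI) :
    closure (orbit f g 0) ⊆ closure (orbit f g x) :=
  closure_orbit_subset_of_mem h hx
    (mem_closure_orbit_of_tendsto_iterate (Or.inl rfl) (h.tendsto_iterate_left hx))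

theorem isMinimalSet_closure_orbit_zero (h : memC f g) :
    IsMinimalSet f g (closure (orbit f g 0)) := by
  have h0 : (0 : ℝ) ∈ unitI := left_mem_Icc.2 zero_le_one
  refine ⟨⟨_, subset_closure (iterate_succ_mem_orbit (Or.inl rfl) 0)⟩,
    closure_orbit_subset_unitI h h0, fun y hy => ?_⟩
  exact (closure_orbit_subset_of_mem h h0 hy).antisymm
    (closure_orbit_zero_subset h (closure_orbit_subset_unitI h h0 hy))

end Orbit

theorem IsMinimalSet.eq_closure_orbit_zero {f g : ℝ → ℝ} (h : memC f g) {M : Set ℝ}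
    (hM : IsMinimalSet f g M) : M = closure (orbit f g 0) := by
  obtain ⟨⟨x, hxM⟩, hMI, hmin⟩ := hM
  have h0M : (0 : ℝ) ∈ M := hmin x hxM ▸
    mem_closure_orbit_of_tendsto_iterate (Or.inl rfl) (h.tendsto_iterate_left (hMI hxM))
  exact (hmin 0 h0M).symm

theorem unique_minimal_set (f g : ℝ → ℝ) (h : memC f g) :
    (∃! M : Set ℝ, IsMinimalSet f g M) ∧
    IsMinimalSet f g (closure (orbit f g 0)) ∧
    closure (orbit f g 0) = closure (orbit f g 1) := by
  have hmin := isMinimalSet_closure_orbit_zero h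
  have h1 : (1 : ℝ) ∈ closure (orbit f g 0) :=
    mem_closure_orbit_of_tendsto_iterate (Or.inr rfl)
      (h.tendsto_iterate_right (left_mem_Icc.2 zero_le_one))
  exact ⟨⟨_, hmin, fun _ hM => hM.eq_closure_orbit_zero h⟩, hmin, (hmin.2.2 1 h1).symm⟩
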